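/- Let A, B, C, D, F, G, E be compatible matrices over ℂ (or H). If A X + Y B + C Z₁ D + F Z₂ G = E is solvable, then rank of the block matrix [E A C; B 0 0; G 0 0] equals rank [A C] + rank [B; G]. -/

import Mathlib

/-!
The solvability of the equation says exactly that `E = M * U + V * N` with `M = [A C]`,
`N = [B; G]`, `U = [X; Z₁ D]` and `V = [Y F Z₂]`. Then the unimodular block row and column
operations `[1 -V; 0 1]` and `[1 0; -U 1]` clear the `E` block, and the remaining antidiagonal
matrix `[0 M; N 0]` has rank `rank M + rank N`.
-/

open Matrix Module

theorem Submodule.finrank_prod {K M N : Type*} [DivisionRing K] [AddCommGroup M] [Module K M]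
    [AddCommGroup N] [Module K N] (p : Submodule K M) (q : Submodule K N)
    [FiniteDimensional K p] [FiniteDimensional K q] :
    finrank K (p.prod q) = finrank K p + finrank K q := by
  have hrange : LinearMap.range (p.subtype.prodMap q.subtype) = p.prod q := by simp
  rw [← hrange, LinearMap.finrank_range_of_inj, Module.finrank_prod]
  exact Prod.map_injective.mpr ⟨p.injective_subtype, q.injective_subtype⟩

theorem LinearMap.finrank_range_prodMap {K M N M' N' : Type*} [DivisionRing K]
    [AddCommGroup M] [Module K M] [AddCommGroup N] [Module K N]
    [AddCommGroup M'] [Module K M'] [AddCommGroup N'] [Module K N']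
    [FiniteDimensional K M'] [FiniteDimensional K N'] (f : M →ₗ[K] M') (g : N →ₗ[K] N') :
    finrank K (range (f.prodMap g)) = finrank K (range f) + finrank K (range g) := by
  rw [range_prodMap, Submodule.finrank_prod]

namespace Matrix

variable {K l m n o : Type*} [Field K] [Fintype l] [Fintype m] [Fintype n] [Fintype o]

theorem rank_fromBlocks_zero₁₂_zero₂₁ (M : Matrix l m K) (N : Matrix n o K) :
    (fromBlocks M 0 0 N).rank = M.rank + N.rank := by
  let eDom := LinearEquiv.sumArrowLequivProdArrow m o K K
  let eCod := LinearEquiv.sumArrowLequivProdArrow l n K K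
  have hmulVec : (fromBlocks M 0 0 N).mulVecLin =
      eCod.symm.toLinearMap ∘ₗ M.mulVecLin.prodMap N.mulVecLin ∘ₗ eDom.toLinearMap := by
    ext v (i | i) <;>
      simp [eDom, eCod, fromBlocks_mulVec, LinearEquiv.sumArrowLequivProdArrow,
        Equiv.sumArrowEquivProdArrow]
  rw [rank, hmulVec, LinearMap.range_comp, LinearMap.range_comp_of_range_eq_top _ eDom.range,
    LinearEquiv.finrank_map_eq, LinearMap.finrank_range_prodMap]
  rfl

theorem rank_fromBlocks_zero₁₁_zero₂₂ (M : Matrix l m K) (N : Matrix n o K) :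
    (fromBlocks 0 M N 0).rank = M.rank + N.rank := by
  rw [← rank_fromBlocks_zero₁₂_zero₂₁, ← rank_submatrix _ (Equiv.refl _) (Equiv.sumComm o m)]
  congr 1
  ext (i | i) (j | j) <;> rfl

variable [DecidableEq l] [DecidableEq m] [DecidableEq n] [DecidableEq o]

theorem rank_fromBlocks_of_eq_mul_add_mul {E : Matrix l m K} {M : Matrix l o K}
    {N : Matrix n m K} (U : Matrix o m K) (V : Matrix l n K) (hE : E = M * U + V * N) :
    (fromBlocks E M N 0).rank = M.rank + N.rank := by
  let P : Matrix (l ⊕ n) (l ⊕ n) K := fromBlocks 1 (-V) 0 1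
  let Q : Matrix (m ⊕ o) (m ⊕ o) K := fromBlocks 1 0 (-U) 1
  have hP : IsUnit P.det := by simp [P]
  have hQ : IsUnit Q.det := by simp [Q]
  have hreduce : P * fromBlocks E M N 0 * Q = fromBlocks 0 M N 0 := by
    simp only [P, Q, fromBlocks_multiply]
    congr 1 <;> simp [hE, Matrix.neg_mul, Matrix.mul_neg]
  rw [← rank_mul_eq_right_of_isUnit_det P _ hP, ← rank_mul_eq_left_of_isUnit_det Q _ hQ, hreduce,
    rank_fromBlocks_zero₁₁_zero₂₂]

end Matrix

/-- If A X + Y B + C Z₁ D + F Z₂ G = E is solvable then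
rank [E A C; B 0 0; G 0 0] = rank [A C] + rank [B; G]. -/
theorem stmt15 {mm nn p q r s t u : ℕ}
    (E : Matrix (Fin mm) (Fin nn) ℂ)
    (A : Matrix (Fin mm) (Fin p) ℂ) (B : Matrix (Fin q) (Fin nn) ℂ)
    (C : Matrix (Fin mm) (Fin r) ℂ) (D : Matrix (Fin s) (Fin nn) ℂ)
    (F : Matrix (Fin mm) (Fin t) ℂ) (G : Matrix (Fin u) (Fin nn) ℂ)
    (X : Matrix (Fin p) (Fin nn) ℂ) (Y : Matrix (Fin mm) (Fin q) ℂ)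
    (Z₁ : Matrix (Fin r) (Fin s) ℂ) (Z₂ : Matrix (Fin t) (Fin u) ℂ)
    (hsol : A * X + Y * B + C * Z₁ * D + F * Z₂ * G = E) :
    (Matrix.fromBlocks E (Matrix.fromCols A C) (Matrix.fromRows B G) 0).rank
      = (Matrix.fromCols A C).rank + (Matrix.fromRows B G).rank := by
  refine rank_fromBlocks_of_eq_mul_add_mul (fromRows X (Z₁ * D)) (fromCols Y (F * Z₂)) ?_
  rw [fromCols_mul_fromRows, fromCols_mul_fromRows, ← hsol, Matrix.mul_assoc, Matrix.mul_assoc]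
  abel
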